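/- arXiv:2502.14237 — 2 statements merged into one kernel-verified Lean document; each statement's English description precedes it below -/
import Mathlib

section
/- For a > 0, b ≥ 2, and p a homogeneous harmonic polynomial of degree b on ℝⁿ, Δ²((1+r²)^{−a} p) = 2a(2a+2)(2a+4)(2a+6)(1+r²)^{−a−4} p + 4a(2a+2)(2a+4)(n−2a+2b−4)(1+r²)^{−a−3} p + 2a(2a+2)(n−2a+2b−2)(n−2a+2b−4)(1+r²)^{−a−2} p, where r = |x|. -/
/-- The partial derivative `∂ᵢ f` on `ℝⁿ = EuclideanSpace ℝ (Fin n)`. -/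
noncomputable def pd (n : ℕ) (i : Fin n) (f : EuclideanSpace ℝ (Fin n) → ℝ)
    (x : EuclideanSpace ℝ (Fin n)) : ℝ :=
  fderiv ℝ f x (EuclideanSpace.single i 1)

/-- The Euclidean Laplacian `Δf = ∑ᵢ ∂ᵢ∂ᵢ f` on `ℝⁿ`. -/
noncomputable def lap (n : ℕ) (f : EuclideanSpace ℝ (Fin n) → ℝ)
    (x : EuclideanSpace ℝ (Fin n)) : ℝ :=
  ∑ i, pd n i (pd n i f) x

/-!
Write `g = 1 + ‖x‖²`. The product rule gives, for any `C²` function `f`,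
`Δ(g^c f) = g^c Δf + 4c g^(c-1) ⟨∇f, x⟩ + 2cn g^(c-1) f + 4c(c-1) g^(c-2) ‖x‖² f`.
For `p` harmonic and homogeneous of degree `b`, Euler's identity `⟨∇p, x⟩ = b p` and
`‖x‖² = g - 1` collapse this to `Δ(g^c p) = 2c(n+2b+2c-2) g^(c-1) p + 4c(1-c) g^(c-2) p`,
again a combination of functions of the same shape. Applying it to `c = -a`, then to
`c = -a-1` and `c = -a-2`, gives the formula.
-/

open Real

section Weight

variable {E : Type*} [NormedAddCommGroup E] [InnerProductSpace ℝ E]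

theorem contDiff_one_add_norm_sq_rpow_mul {k : WithTop ℕ∞} (c : ℝ) {f : E → ℝ}
    (hf : ContDiff ℝ k f) : ContDiff ℝ k (fun y => (1 + ‖y‖ ^ 2) ^ c * f y) := by
  refine ContDiff.mul (contDiff_iff_contDiffAt.2 fun x => ?_) hf
  exact (contDiff_const.add (contDiff_norm_sq ℝ)).contDiffAt.rpow_const_of_ne (by positivity)

theorem hasFDerivAt_one_add_norm_sq_rpow_mul (c : ℝ) {f : E → ℝ} {f' : E →L[ℝ] ℝ} {x : E}
    (hf : HasFDerivAt f f' x) :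
    HasFDerivAt (fun y => (1 + ‖y‖ ^ 2) ^ c * f y)
      ((1 + ‖x‖ ^ 2) ^ c • f' + f x • (c * (1 + ‖x‖ ^ 2) ^ (c - 1)) • 2 • innerSL ℝ x) x := by
  have hg : HasFDerivAt (fun y : E => 1 + ‖y‖ ^ 2) (2 • innerSL ℝ x) x := by
    simpa using (hasStrictFDerivAt_norm_sq x).hasFDerivAt.const_add 1
  exact (hg.rpow_const (Or.inl (by positivity))).mul hf

end Weight

section Homogeneous

variable {E : Type*} [NormedAddCommGroup E] [NormedSpace ℝ E]

theorem fderiv_apply_self_of_homogeneous {p : E → ℝ} {b : ℕ} {y : E}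
    (hp : DifferentiableAt ℝ p y) (hhom : ∀ t : ℝ, p (t • y) = t ^ b * p y) :
    fderiv ℝ p y y = b * p y := by
  have hray : HasDerivAt (fun t : ℝ => p (t • y)) (fderiv ℝ p y y) 1 := by
    have hp' : HasFDerivAt p (fderiv ℝ p y) ((1 : ℝ) • y) := by simpa using hp.hasFDerivAt
    exact hp'.comp_hasDerivAt 1 (by simpa using (hasDerivAt_id (1 : ℝ)).smul_const y)
  have hpow : HasDerivAt (fun t : ℝ => t ^ b * p y) (b * p y) 1 := by
    simpa using (hasDerivAt_pow b (1 : ℝ)).mul_const (p y)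
  exact hray.unique (by simpa only [hhom] using hpow)

end Homogeneous

variable {n : ℕ}

theorem ContDiff.differentiable_pd {f : EuclideanSpace ℝ (Fin n) → ℝ} (hf : ContDiff ℝ 2 f)
    (i : Fin n) : Differentiable ℝ (pd n i f) :=
  ((hf.fderiv_right (m := 1) one_add_one_eq_two.le).clm_apply contDiff_const).differentiable
    one_ne_zero

theorem pd_fun_add (i : Fin n) {f g : EuclideanSpace ℝ (Fin n) → ℝ}
    {x : EuclideanSpace ℝ (Fin n)} (hf : DifferentiableAt ℝ f x) (hg : DifferentiableAt ℝ g x) :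
    pd n i (fun y => f y + g y) x = pd n i f x + pd n i g x := by
  simp only [pd, fderiv_fun_add hf hg, add_apply]

theorem pd_const_mul (i : Fin n) (A : ℝ) {f : EuclideanSpace ℝ (Fin n) → ℝ}
    {x : EuclideanSpace ℝ (Fin n)} (hf : DifferentiableAt ℝ f x) :
    pd n i (fun y => A * f y) x = A * pd n i f x := by
  simp only [pd, fderiv_const_mul hf, smul_apply, smul_eq_mul]

theorem pd_mul_coord_self (i : Fin n) {f : EuclideanSpace ℝ (Fin n) → ℝ}
    {x : EuclideanSpace ℝ (Fin n)} (hf : DifferentiableAt ℝ f x) :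
    pd n i (fun y => f y * y i) x = pd n i f x * x i + f x := by
  have hcoord : HasFDerivAt (fun y : EuclideanSpace ℝ (Fin n) => y i)
      (PiLp.proj (𝕜 := ℝ) 2 (fun _ : Fin n => ℝ) i) x :=
    PiLp.hasFDerivAt_apply 2 x i
  simp only [pd, (hf.hasFDerivAt.fun_mul hcoord).fderiv, add_apply, smul_apply, PiLp.proj_apply,
    PiLp.single_eq_same, smul_eq_mul, mul_one]
  ring

theorem sum_pd_mul_coord (f : EuclideanSpace ℝ (Fin n) → ℝ) (x : EuclideanSpace ℝ (Fin n)) :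
    ∑ i, pd n i f x * x i = fderiv ℝ f x x := by
  have hx : ∑ i, x i • EuclideanSpace.single i (1 : ℝ) = x := by
    simpa using (EuclideanSpace.basisFun (Fin n) ℝ).sum_repr x
  calc ∑ i, pd n i f x * x i = fderiv ℝ f x (∑ i, x i • EuclideanSpace.single i 1) := by
        simp [pd, mul_comm]
    _ = fderiv ℝ f x x := by rw [hx]

theorem pd_one_add_norm_sq_rpow_mul (c : ℝ) (i : Fin n) {f : EuclideanSpace ℝ (Fin n) → ℝ}
    {x : EuclideanSpace ℝ (Fin n)} (hf : DifferentiableAt ℝ f x) :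
    pd n i (fun y => (1 + ‖y‖ ^ 2) ^ c * f y) x
      = (1 + ‖x‖ ^ 2) ^ c * pd n i f x + 2 * c * ((1 + ‖x‖ ^ 2) ^ (c - 1) * (f x * x i)) := by
  simp only [pd, (hasFDerivAt_one_add_norm_sq_rpow_mul c hf.hasFDerivAt).fderiv, add_apply,
    smul_apply, smul_eq_mul, coe_innerSL_apply, EuclideanSpace.inner_single_right, ringHom_apply,
    one_mul, nsmul_eq_mul, Nat.cast_ofNat]
  ring

theorem differentiableAt_one_add_norm_sq_rpow_mul (c : ℝ) {f : EuclideanSpace ℝ (Fin n) → ℝ}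
    {x : EuclideanSpace ℝ (Fin n)} (hf : DifferentiableAt ℝ f x) :
    DifferentiableAt ℝ (fun y => (1 + ‖y‖ ^ 2) ^ c * f y) x :=
  (hasFDerivAt_one_add_norm_sq_rpow_mul c hf.hasFDerivAt).differentiableAt

theorem pd_pd_one_add_norm_sq_rpow_mul (c : ℝ) (i : Fin n) {f : EuclideanSpace ℝ (Fin n) → ℝ}
    {x : EuclideanSpace ℝ (Fin n)} (hf : Differentiable ℝ f)
    (hpf : DifferentiableAt ℝ (pd n i f) x) :
    pd n i (pd n i (fun y => (1 + ‖y‖ ^ 2) ^ c * f y)) x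
      = (1 + ‖x‖ ^ 2) ^ c * pd n i (pd n i f) x
        + 4 * c * (1 + ‖x‖ ^ 2) ^ (c - 1) * (pd n i f x * x i)
        + 2 * c * (1 + ‖x‖ ^ 2) ^ (c - 1) * f x
        + 4 * c * (c - 1) * (1 + ‖x‖ ^ 2) ^ (c - 2) * f x * x i ^ 2 := by
  have hfi : Differentiable ℝ (fun y => f y * y i) := by fun_prop
  have hpd : pd n i (fun y => (1 + ‖y‖ ^ 2) ^ c * f y) = fun y =>
      (1 + ‖y‖ ^ 2) ^ c * pd n i f y + 2 * c * ((1 + ‖y‖ ^ 2) ^ (c - 1) * (f y * y i)) :=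
    funext fun y => pd_one_add_norm_sq_rpow_mul c i (hf y)
  rw [hpd, pd_fun_add i (differentiableAt_one_add_norm_sq_rpow_mul c hpf)
      ((differentiableAt_one_add_norm_sq_rpow_mul (c - 1) (hfi x)).const_mul _),
    pd_one_add_norm_sq_rpow_mul c i hpf,
    pd_const_mul i _ (differentiableAt_one_add_norm_sq_rpow_mul (c - 1) (hfi x)),
    pd_one_add_norm_sq_rpow_mul (c - 1) i (hfi x), pd_mul_coord_self i (hf x),
    show c - 1 - 1 = c - 2 by ring]
  ring

theorem lap_one_add_norm_sq_rpow_mul (c : ℝ) {f : EuclideanSpace ℝ (Fin n) → ℝ}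
    (hf : ContDiff ℝ 2 f) (x : EuclideanSpace ℝ (Fin n)) :
    lap n (fun y => (1 + ‖y‖ ^ 2) ^ c * f y) x
      = (1 + ‖x‖ ^ 2) ^ c * lap n f x
        + 4 * c * (1 + ‖x‖ ^ 2) ^ (c - 1) * fderiv ℝ f x x
        + 2 * c * n * (1 + ‖x‖ ^ 2) ^ (c - 1) * f x
        + 4 * c * (c - 1) * (1 + ‖x‖ ^ 2) ^ (c - 2) * ‖x‖ ^ 2 * f x := by
  simp only [lap]
  rw [Finset.sum_congr rfl fun i _ =>
    pd_pd_one_add_norm_sq_rpow_mul c i (hf.differentiable two_ne_zero) (hf.differentiable_pd i x)]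
  simp only [Finset.sum_add_distrib, ← Finset.mul_sum, Finset.sum_const, Finset.card_univ,
    Fintype.card_fin, nsmul_eq_mul]
  rw [sum_pd_mul_coord, ← EuclideanSpace.real_norm_sq_eq]
  ring

theorem lap_fun_const_mul_add_const_mul (A B : ℝ) {f g : EuclideanSpace ℝ (Fin n) → ℝ}
    (hf : ContDiff ℝ 2 f) (hg : ContDiff ℝ 2 g) (x : EuclideanSpace ℝ (Fin n)) :
    lap n (fun y => A * f y + B * g y) x = A * lap n f x + B * lap n g x := by
  have hlin {F G : EuclideanSpace ℝ (Fin n) → ℝ} (i : Fin n) (y : EuclideanSpace ℝ (Fin n))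
      (hF : DifferentiableAt ℝ F y) (hG : DifferentiableAt ℝ G y) :
      pd n i (fun z => A * F z + B * G z) y = A * pd n i F y + B * pd n i G y := by
    rw [pd_fun_add i (hF.const_mul A) (hG.const_mul B), pd_const_mul i A hF, pd_const_mul i B hG]
  have hpd_fg (i : Fin n) : pd n i (fun y => A * f y + B * g y)
      = fun y => A * pd n i f y + B * pd n i g y :=
    funext fun y => hlin i y (hf.differentiable two_ne_zero y) (hg.differentiable two_ne_zero y)
  simp only [lap, hpd_fg, hlin _ x (hf.differentiable_pd _ x) (hg.differentiable_pd _ x),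
    Finset.sum_add_distrib, Finset.mul_sum]

theorem lap_one_add_norm_sq_rpow_mul_of_harmonic_of_homogeneous (c : ℝ)
    {p : EuclideanSpace ℝ (Fin n) → ℝ} {b : ℕ} (hp : ContDiff ℝ 2 p) {x : EuclideanSpace ℝ (Fin n)}
    (hhom : ∀ t : ℝ, p (t • x) = t ^ b * p x) (hharm : lap n p x = 0) :
    lap n (fun y => (1 + ‖y‖ ^ 2) ^ c * p y) x
      = 2 * c * (n + 2 * b + 2 * c - 2) * ((1 + ‖x‖ ^ 2) ^ (c - 1) * p x)
        + 4 * c * (1 - c) * ((1 + ‖x‖ ^ 2) ^ (c - 2) * p x) := by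
  have hstep : (1 + ‖x‖ ^ 2) ^ (c - 2) * (1 + ‖x‖ ^ 2) = (1 + ‖x‖ ^ 2) ^ (c - 1) := by
    rw [← rpow_add_one (by positivity)]
    ring_nf
  rw [lap_one_add_norm_sq_rpow_mul c hp, hharm,
    fderiv_apply_self_of_homogeneous (hp.differentiable two_ne_zero x) hhom]
  linear_combination 4 * c * (c - 1) * p x * hstep

theorem bilap_inv_pow_mul_harmonic_general (n b : ℕ) (a : ℝ)
    (p : EuclideanSpace ℝ (Fin n) → ℝ)
    (hsmooth : ContDiff ℝ (⊤ : ℕ∞) p)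
    (hhom : ∀ (t : ℝ) (x : EuclideanSpace ℝ (Fin n)), p (t • x) = t ^ b * p x)
    (hharm : ∀ x, lap n p x = 0)
    (x : EuclideanSpace ℝ (Fin n)) :
    lap n (lap n (fun y => (1 + ‖y‖ ^ 2) ^ (-a) * p y)) x =
      2 * a * (2 * a + 2) * (2 * a + 4) * (2 * a + 6) * (1 + ‖x‖ ^ 2) ^ (-a - 4) * p x
      + 4 * a * (2 * a + 2) * (2 * a + 4) * ((n : ℝ) - 2 * a + 2 * (b : ℝ) - 4)
          * (1 + ‖x‖ ^ 2) ^ (-a - 3) * p x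
      + 2 * a * (2 * a + 2) * ((n : ℝ) - 2 * a + 2 * (b : ℝ) - 2)
          * ((n : ℝ) - 2 * a + 2 * (b : ℝ) - 4) * (1 + ‖x‖ ^ 2) ^ (-a - 2) * p x := by
  have hp : ContDiff ℝ 2 p := hsmooth.of_le (WithTop.coe_le_coe.2 le_top)
  have hlap (c : ℝ) (y : EuclideanSpace ℝ (Fin n)) :=
    lap_one_add_norm_sq_rpow_mul_of_harmonic_of_homogeneous c hp (hhom · y) (hharm y)
  have hinner : lap n (fun y => (1 + ‖y‖ ^ 2) ^ (-a) * p y) = fun y =>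
      2 * -a * (n + 2 * b + 2 * -a - 2) * ((1 + ‖y‖ ^ 2) ^ (-a - 1) * p y)
        + 4 * -a * (1 - -a) * ((1 + ‖y‖ ^ 2) ^ (-a - 2) * p y) :=
    funext (hlap (-a))
  rw [hinner, lap_fun_const_mul_add_const_mul _ _ (contDiff_one_add_norm_sq_rpow_mul _ hp)
    (contDiff_one_add_norm_sq_rpow_mul _ hp), hlap, hlap,
    show -a - 1 - 1 = -a - 2 by ring, show -a - 1 - 2 = -a - 3 by ring,
    show -a - 2 - 1 = -a - 3 by ring, show -a - 2 - 2 = -a - 4 by ring]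
  ring

/-- For `a > 0`, `b ≥ 2`, and `p` a homogeneous harmonic polynomial of degree `b` on `ℝⁿ`,
with `r = |x|`:
`Δ²((1+r²)^{−a} p) = 2a(2a+2)(2a+4)(2a+6)(1+r²)^{−a−4} p
  + 4a(2a+2)(2a+4)(n−2a+2b−4)(1+r²)^{−a−3} p
  + 2a(2a+2)(n−2a+2b−2)(n−2a+2b−4)(1+r²)^{−a−2} p`. -/
theorem bilap_inv_pow_mul_harmonic (n b : ℕ) (hn : 1 ≤ n) (a : ℝ) (ha : 0 < a) (hb : 2 ≤ b)
    (p : EuclideanSpace ℝ (Fin n) → ℝ)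
    (hsmooth : ContDiff ℝ (⊤ : ℕ∞) p)
    (hhom : ∀ (t : ℝ) (x : EuclideanSpace ℝ (Fin n)), p (t • x) = t ^ b * p x)
    (hharm : ∀ x, lap n p x = 0)
    (x : EuclideanSpace ℝ (Fin n)) :
    lap n (lap n (fun y => (1 + ‖y‖ ^ 2) ^ (-a) * p y)) x =
      2 * a * (2 * a + 2) * (2 * a + 4) * (2 * a + 6) * (1 + ‖x‖ ^ 2) ^ (-a - 4) * p x
      + 4 * a * (2 * a + 2) * (2 * a + 4) * ((n : ℝ) - 2 * a + 2 * (b : ℝ) - 4)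
          * (1 + ‖x‖ ^ 2) ^ (-a - 3) * p x
      + 2 * a * (2 * a + 2) * ((n : ℝ) - 2 * a + 2 * (b : ℝ) - 2)
          * ((n : ℝ) - 2 * a + 2 * (b : ℝ) - 4) * (1 + ‖x‖ ^ 2) ^ (-a - 2) * p x :=
  bilap_inv_pow_mul_harmonic_general n b a p hsmooth hhom hharm x
end

section
/- For homogeneous harmonic polynomials Pq, Pq' of degree s on ℝⁿ, ∫_{S^{n−1}} ∂ⱼPq ∂ⱼPq' = s(n+2s−2) ∫_{S^{n−1}} Pq Pq'. -/
open MeasureTheory Metric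

/-! Integrate against the Gaussian weight `e^{-‖x‖²}` over all of `ℝⁿ`. Integrating by parts in
each coordinate, `∫ ∇P·∇P' e^{-‖x‖²} = ∫ P (2 x·∇P' - ΔP') e^{-‖x‖²} = 2s ∫ P P' e^{-‖x‖²}` by
Euler's identity `x·∇P' = s P'` and harmonicity of `P'`. In polar coordinates a continuous
function `g` homogeneous of degree `d` has `∫ g e^{-‖x‖²} = Γ((n + d)/2)/2 · ∫_{S^{n-1}} g`; the two
integrands have degrees `2s - 2` and `2s`, and `Γ((n + 2s)/2) = (n + 2s - 2)/2 · Γ((n + 2s - 2)/2)`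
turns `2s` into `s(n + 2s - 2)`. -/

open Set Real Module

-- The degree is real so that a partial derivative lowers it by one with no truncated subtraction.
def IsPosHomogeneous {E : Type*} [AddCommGroup E] [Module ℝ E] (f : E → ℝ) (d : ℝ) : Prop :=
  ∀ t : ℝ, 0 < t → ∀ x, f (t • x) = t ^ d * f x

namespace IsPosHomogeneous

variable {E : Type*} [NormedAddCommGroup E] [NormedSpace ℝ E] {f g : E → ℝ} {a b : ℝ}

theorem of_pow {s : ℕ} (h : ∀ (t : ℝ) x, f (t • x) = t ^ s * f x) : IsPosHomogeneous f s :=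
  fun t _ x => by rw [h, Real.rpow_natCast]

theorem mul (hf : IsPosHomogeneous f a) (hg : IsPosHomogeneous g b) :
    IsPosHomogeneous (fun x => f x * g x) (a + b) := fun t ht x => by
  show f (t • x) * g (t • x) = _
  rw [hf t ht, hg t ht, Real.rpow_add ht]
  ring

theorem sum {ι : Type*} (s : Finset ι) {f : ι → E → ℝ} (h : ∀ i ∈ s, IsPosHomogeneous (f i) a) :
    IsPosHomogeneous (fun x => ∑ i ∈ s, f i x) a := fun t ht x => by
  rw [Finset.mul_sum]
  exact Finset.sum_congr rfl fun i hi => h i hi t ht x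

theorem fderiv_smul (hf : Differentiable ℝ f) (hfh : IsPosHomogeneous f a) {t : ℝ} (ht : 0 < t)
    (x : E) : fderiv ℝ f (t • x) = t ^ (a - 1) • fderiv ℝ f x := by
  have h_chain : HasFDerivAt (fun y => f (t • y))
      ((fderiv ℝ f (t • x)).comp (t • ContinuousLinearMap.id ℝ E)) x :=
    (hf (t • x)).hasFDerivAt.comp x ((ContinuousLinearMap.id ℝ E).hasFDerivAt.const_smul t)
  have h_scale : HasFDerivAt (fun y => f (t • y)) (t ^ a • fderiv ℝ f x) x := by
    rw [funext (hfh t ht)]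
    exact (hf x).hasFDerivAt.const_mul _
  ext v
  have h := congrArg (fun L : E →L[ℝ] ℝ => t⁻¹ * L v) (h_chain.unique h_scale)
  simp only [ContinuousLinearMap.comp_apply, FunLike.coe_smul, Pi.smul_apply,
    ContinuousLinearMap.id_apply, map_smul, smul_eq_mul, ← mul_assoc, inv_mul_cancel₀ ht.ne',
    one_mul] at h
  rw [h, FunLike.coe_smul, Pi.smul_apply, smul_eq_mul, Real.rpow_sub_one ht.ne', div_eq_inv_mul,
    mul_assoc]

theorem fderiv_apply_self (hfh : IsPosHomogeneous f a) {x : E} (hf : DifferentiableAt ℝ f x) :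
    fderiv ℝ f x x = a * f x := by
  have h_chain : HasDerivAt (fun t : ℝ => f (t • x)) (fderiv ℝ f x x) 1 := by
    have := hf.hasFDerivAt.comp_hasDerivAt_of_eq (1 : ℝ) ((hasDerivAt_id (1 : ℝ)).smul_const x)
      (one_smul ℝ x).symm
    rwa [one_smul] at this
  have h_scale : HasDerivAt (fun t : ℝ => f (t • x)) (a * f x) 1 := by
    have := (Real.hasDerivAt_rpow_const (x := 1) (p := a) (Or.inl one_ne_zero)).mul_const (f x)
    simp only [Real.one_rpow, mul_one] at this
    refine this.congr_of_eventuallyEq ?_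
    filter_upwards [lt_mem_nhds one_pos] with t ht using hfh t ht x
  exact h_chain.unique h_scale

end IsPosHomogeneous

section Euclidean

variable {n : ℕ} {f g : EuclideanSpace ℝ (Fin n) → ℝ} {a : ℝ}

theorem isPosHomogeneous_apply (j : Fin n) :
    IsPosHomogeneous (fun x : EuclideanSpace ℝ (Fin n) => x j) 1 := fun t _ x => by
  simp

theorem IsPosHomogeneous.pd (hfh : IsPosHomogeneous f a) (hf : Differentiable ℝ f) (j : Fin n) :
    IsPosHomogeneous (pd n j f) (a - 1) := fun t ht x => by
  simp only [_root_.pd, hfh.fderiv_smul hf ht, FunLike.coe_smul, Pi.smul_apply, smul_eq_mul]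

theorem contDiff_pd {m : WithTop ℕ∞} (hf : ContDiff ℝ (m + 1) f) (j : Fin n) :
    ContDiff ℝ m (pd n j f) :=
  (hf.fderiv_right le_rfl).clm_apply contDiff_const

theorem fderiv_apply_eq_sum_mul_pd (x : EuclideanSpace ℝ (Fin n)) :
    fderiv ℝ f x x = ∑ j, x j * pd n j f x := by
  set L := fderiv ℝ f x
  conv_lhs => rw [← (EuclideanSpace.basisFun (Fin n) ℝ).sum_repr x]
  simp [pd, L]

theorem pd_mul {x : EuclideanSpace ℝ (Fin n)} (hf : DifferentiableAt ℝ f x)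
    (hg : DifferentiableAt ℝ g x) (j : Fin n) :
    pd n j (fun y => f y * g y) x = pd n j f x * g x + f x * pd n j g x := by
  simp only [pd, fderiv_fun_mul hf hg, FunLike.coe_add, Pi.add_apply,
    FunLike.coe_smul, Pi.smul_apply, smul_eq_mul]
  ring

theorem pd_exp_neg_norm_sq (j : Fin n) (x : EuclideanSpace ℝ (Fin n)) :
    pd n j (fun y => exp (-‖y‖ ^ 2)) x = -2 * x j * exp (-‖x‖ ^ 2) := by
  have h : HasFDerivAt (fun y : EuclideanSpace ℝ (Fin n) => -‖y‖ ^ 2) _ x :=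
    (hasStrictFDerivAt_norm_sq x).hasFDerivAt.neg
  rw [pd, h.exp.fderiv]
  simp [EuclideanSpace.inner_single_right]
  ring

end Euclidean

section Polar

variable {E F : Type*} [NormedAddCommGroup E] [NormedSpace ℝ E] [FiniteDimensional ℝ E]
  [MeasurableSpace E] [BorelSpace E] [Nontrivial E] (μ : Measure E) [μ.IsAddHaarMeasure]
  [NormedAddCommGroup F]

theorem integrable_iff_integrable_prod_toSphere (G : E → F) :
    Integrable G μ ↔
      Integrable (fun p : sphere (0 : E) 1 × Ioi (0 : ℝ) => G ((p.2 : ℝ) • (p.1 : E)))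
      (μ.toSphere.prod (Measure.volumeIoiPow (finrank ℝ E - 1))) := by
  conv_lhs => rw [← restrict_compl_singleton (μ := μ) 0, ← IntegrableOn,
    integrableOn_iff_comap_subtypeVal (measurableSet_singleton 0).compl]
  rw [← (μ.measurePreserving_homeomorphUnitSphereProd).integrable_comp_emb
    (Homeomorph.measurableEmbedding _)]
  refine integrable_congr (.of_forall fun x => ?_)
  simp only [Function.comp_apply, ← homeomorphUnitSphereProd_symm_apply_coe,
    Homeomorph.symm_apply_apply]

theorem integral_eq_integral_prod_toSphere [NormedSpace ℝ F] (G : E → F) :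
    ∫ x, G x ∂μ = ∫ p : sphere (0 : E) 1 × Ioi (0 : ℝ), G ((p.2 : ℝ) • (p.1 : E))
      ∂(μ.toSphere.prod (Measure.volumeIoiPow (finrank ℝ E - 1))) := by
  conv_lhs => rw [← restrict_compl_singleton (μ := μ) 0,
    ← integral_subtype_comap (measurableSet_singleton 0).compl]
  rw [← (μ.measurePreserving_homeomorphUnitSphereProd).integral_comp
    (Homeomorph.measurableEmbedding _)]
  congr 1 with x
  simp only [← homeomorphUnitSphereProd_symm_apply_coe, Homeomorph.symm_apply_apply]

end Polar

section Radial

variable {F : Type*} [NormedAddCommGroup F] [NormedSpace ℝ F]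

theorem integrable_volumeIoiPow_iff (k : ℕ) (ρ : ℝ → F) :
    Integrable (fun r : Ioi (0 : ℝ) => ρ r) (Measure.volumeIoiPow k) ↔
      IntegrableOn (fun r => r ^ k • ρ r) (Ioi 0) := by
  rw [integrableOn_iff_comap_subtypeVal measurableSet_Ioi, Measure.volumeIoiPow,
    integrable_withDensity_iff_integrable_smul' (by fun_prop) (by simp)]
  refine integrable_congr (.of_forall fun r => ?_)
  simp [ENNReal.toReal_ofReal (pow_nonneg r.2.out.le k)]

theorem integral_volumeIoiPow (k : ℕ) (ρ : ℝ → F) :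
    ∫ r : Ioi (0 : ℝ), ρ r ∂Measure.volumeIoiPow k = ∫ r in Ioi 0, r ^ k • ρ r := by
  simp only [Measure.volumeIoiPow, ENNReal.ofReal]
  rw [integral_withDensity_eq_integral_smul (measurable_subtype_coe.pow_const _).real_toNNReal,
    integral_subtype_comap measurableSet_Ioi fun r => Real.toNNReal (r ^ k) • ρ r]
  refine setIntegral_congr_fun measurableSet_Ioi fun r hr => ?_
  rw [NNReal.smul_def, Real.coe_toNNReal _ (pow_nonneg hr.out.le _)]

theorem pow_mul_rpow_mul_exp_neg_sq_eqOn (k : ℕ) (d : ℝ) :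
    EqOn (fun r : ℝ => r ^ k * (r ^ d * exp (-r ^ 2)))
      (fun r => r ^ ((k : ℝ) + d) * exp (-r ^ (2 : ℝ))) (Ioi 0) := fun r hr => by
  simp only [Real.rpow_add hr, Real.rpow_natCast, Real.rpow_two]
  ring

theorem integrableOn_pow_mul_rpow_mul_exp_neg_sq {k : ℕ} {d : ℝ} (hkd : -1 < (k : ℝ) + d) :
    IntegrableOn (fun r : ℝ => r ^ k * (r ^ d * exp (-r ^ 2))) (Ioi 0) :=
  (integrableOn_rpow_mul_exp_neg_rpow hkd two_pos).congr_fun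
    (pow_mul_rpow_mul_exp_neg_sq_eqOn k d).symm measurableSet_Ioi

theorem integral_pow_mul_rpow_mul_exp_neg_sq {k : ℕ} {d : ℝ} (hkd : -1 < (k : ℝ) + d) :
    ∫ r in Ioi (0 : ℝ), r ^ k * (r ^ d * exp (-r ^ 2)) = Gamma (((k : ℝ) + d + 1) / 2) / 2 := by
  rw [setIntegral_congr_fun measurableSet_Ioi (pow_mul_rpow_mul_exp_neg_sq_eqOn k d),
    integral_rpow_mul_exp_neg_rpow two_pos hkd]
  ring

end Radial

section HomogeneousGaussian

variable {E : Type*} [NormedAddCommGroup E] [NormedSpace ℝ E] {g : E → ℝ} {d : ℝ}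

theorem IsPosHomogeneous.mul_exp_neg_norm_sq_smul (hgh : IsPosHomogeneous g d)
    (p : sphere (0 : E) 1 × Ioi (0 : ℝ)) :
    g ((p.2 : ℝ) • (p.1 : E)) * exp (-‖(p.2 : ℝ) • (p.1 : E)‖ ^ 2)
      = g p.1 * ((p.2 : ℝ) ^ d * exp (-(p.2 : ℝ) ^ 2)) := by
  rw [hgh _ p.2.2, norm_smul, norm_eq_of_mem_sphere p.1, Real.norm_of_nonneg p.2.2.out.le, mul_one]
  ring

variable [FiniteDimensional ℝ E] [MeasurableSpace E] [BorelSpace E] [Nontrivial E]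
  (μ : Measure E) [μ.IsAddHaarMeasure]

theorem IsPosHomogeneous.integrable_mul_exp_neg_norm_sq (hgh : IsPosHomogeneous g d)
    (hg : Continuous g) (hd : -(finrank ℝ E : ℝ) < d) :
    Integrable (fun x => g x * exp (-‖x‖ ^ 2)) μ := by
  have h_sphere : Integrable (fun u : sphere (0 : E) 1 => g u) μ.toSphere :=
    (hg.comp continuous_subtype_val).integrable_of_hasCompactSupport
      (HasCompactSupport.of_compactSpace _)
  have h_ray : Integrable (fun r : Ioi (0 : ℝ) => (r : ℝ) ^ d * exp (-(r : ℝ) ^ 2))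
      (Measure.volumeIoiPow (finrank ℝ E - 1)) := by
    refine (integrable_volumeIoiPow_iff _ _).2 (integrableOn_pow_mul_rpow_mul_exp_neg_sq ?_)
    rw [Nat.cast_pred finrank_pos]
    linarith
  rw [integrable_iff_integrable_prod_toSphere]
  exact (h_sphere.mul_prod h_ray).congr (.of_forall fun p => (hgh.mul_exp_neg_norm_sq_smul p).symm)

theorem IsPosHomogeneous.integral_mul_exp_neg_norm_sq (hgh : IsPosHomogeneous g d)
    (hd : -(finrank ℝ E : ℝ) < d) :
    ∫ x, g x * exp (-‖x‖ ^ 2) ∂μ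
      = Gamma ((finrank ℝ E + d) / 2) / 2 * ∫ u, g u ∂μ.toSphere := by
  have hk : -1 < ((finrank ℝ E - 1 : ℕ) : ℝ) + d := by
    rw [Nat.cast_pred finrank_pos]
    linarith
  rw [integral_eq_integral_prod_toSphere,
    integral_congr_ae (.of_forall hgh.mul_exp_neg_norm_sq_smul),
    integral_prod_mul (fun u : sphere (0 : E) 1 => g u)
      (fun r : Ioi (0 : ℝ) => (r : ℝ) ^ d * exp (-(r : ℝ) ^ 2)),
    integral_volumeIoiPow _ fun r => r ^ d * exp (-r ^ 2)]
  simp only [smul_eq_mul]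
  rw [integral_pow_mul_rpow_mul_exp_neg_sq hk, Nat.cast_pred finrank_pos]
  ring_nf

end HomogeneousGaussian

section GaussianIntegrationByParts

variable {n : ℕ} {f g : EuclideanSpace ℝ (Fin n) → ℝ}

theorem integral_pd_mul_pd_mul_exp_neg_norm_sq (hf : Differentiable ℝ f) (hg : ContDiff ℝ 2 g)
    (j : Fin n) (h_grad : Integrable fun x => pd n j f x * pd n j g x * exp (-‖x‖ ^ 2))
    (h_lap : Integrable fun x =>
      f x * (2 * x j * pd n j g x - pd n j (pd n j g) x) * exp (-‖x‖ ^ 2))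
    (h_prod : Integrable fun x => f x * pd n j g x * exp (-‖x‖ ^ 2)) :
    ∫ x, pd n j f x * pd n j g x * exp (-‖x‖ ^ 2)
      = ∫ x, f x * (2 * x j * pd n j g x - pd n j (pd n j g) x) * exp (-‖x‖ ^ 2) := by
  have hg' : Differentiable ℝ (pd n j g) :=
    (contDiff_pd (m := 1) hg j).differentiable one_ne_zero
  have hw : Differentiable ℝ fun x : EuclideanSpace ℝ (Fin n) => exp (-‖x‖ ^ 2) :=
    fun x => (hasStrictFDerivAt_norm_sq x).hasFDerivAt.neg.exp.differentiableAt
  set G := fun x => pd n j g x * exp (-‖x‖ ^ 2) with hG_def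
  have hG : ∀ x, f x * pd n j G x
      = -(f x * (2 * x j * pd n j g x - pd n j (pd n j g) x) * exp (-‖x‖ ^ 2)) := fun x => by
    rw [hG_def, pd_mul (hg' x) (hw x), pd_exp_neg_norm_sq]
    ring
  have ibp : ∫ x, f x * pd n j G x = -∫ x, pd n j f x * G x :=
    integral_mul_fderiv_eq_neg_fderiv_mul_of_integrable
      (h_grad.congr (.of_forall fun x => mul_assoc _ _ _))
      (h_lap.neg.congr (.of_forall fun x => (hG x).symm))
      (h_prod.congr (.of_forall fun x => mul_assoc _ _ _))
      (fun x _ => hf x) (fun x _ => (hg'.mul hw) x)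
  simp only [hG, integral_neg, neg_inj] at ibp
  simpa only [hG_def, mul_assoc] using ibp.symm

theorem integral_sum_pd_mul_pd_mul_exp_neg_norm_sq_of_homogeneous [NeZero n] {a b : ℝ}
    (hfh : IsPosHomogeneous f a) (hgh : IsPosHomogeneous g b) (hf : ContDiff ℝ 1 f)
    (hg : ContDiff ℝ 2 g) (hab : 2 - n < a + b) :
    ∫ x, (∑ j, pd n j f x * pd n j g x) * exp (-‖x‖ ^ 2)
      = ∫ x, f x * (2 * b * g x - lap n g x) * exp (-‖x‖ ^ 2) := by
  have hf' : Differentiable ℝ f := hf.differentiable one_ne_zero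
  have hg' : Differentiable ℝ g := hg.differentiable two_ne_zero
  have hdf : ∀ j, Continuous (pd n j f) := fun j => (contDiff_pd (m := 0) hf j).continuous
  have hdg : ∀ j, ContDiff ℝ 1 (pd n j g) := fun j => contDiff_pd hg j
  have hint : ∀ {h : EuclideanSpace ℝ (Fin n) → ℝ} {d : ℝ}, IsPosHomogeneous h d →
      Continuous h → a + b - 2 ≤ d → Integrable fun x => h x * exp (-‖x‖ ^ 2) :=
    fun hh hc hd => hh.integrable_mul_exp_neg_norm_sq volume hc
      (by rw [finrank_euclideanSpace_fin]; linarith)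
  have hx : ∀ j : Fin n, Continuous fun x : EuclideanSpace ℝ (Fin n) => x j := fun j => by fun_prop
  have h_grad (j : Fin n) : Integrable fun x => pd n j f x * pd n j g x * exp (-‖x‖ ^ 2) :=
    hint ((hfh.pd hf' j).mul (hgh.pd hg' j)) ((hdf j).mul (hdg j).continuous) (by linarith)
  have h_lap (j : Fin n) : Integrable fun x =>
      f x * (2 * x j * pd n j g x - pd n j (pd n j g) x) * exp (-‖x‖ ^ 2) := by
    have h_drift := hint (hfh.mul ((isPosHomogeneous_apply j).mul (hgh.pd hg' j)))
      (hf.continuous.mul ((hx j).mul (hdg j).continuous)) (by linarith)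
    have h_second := hint (hfh.mul ((hgh.pd hg' j).pd ((hdg j).differentiable one_ne_zero) j))
      (hf.continuous.mul (contDiff_pd (m := 0) (hdg j) j).continuous) (by linarith)
    exact ((h_drift.const_mul 2).sub h_second).congr
      (.of_forall fun x => by simp only [Pi.sub_apply]; ring)
  have h_prod (j : Fin n) : Integrable fun x => f x * pd n j g x * exp (-‖x‖ ^ 2) :=
    hint (hfh.mul (hgh.pd hg' j)) (hf.continuous.mul (hdg j).continuous) (by linarith)
  have h_pointwise (x : EuclideanSpace ℝ (Fin n)) :
      ∑ j, f x * (2 * x j * pd n j g x - pd n j (pd n j g) x) * exp (-‖x‖ ^ 2)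
        = f x * (2 * b * g x - lap n g x) * exp (-‖x‖ ^ 2) := by
    have h_euler : ∑ j, x j * pd n j g x = b * g x := by
      rw [← fderiv_apply_eq_sum_mul_pd, hgh.fderiv_apply_self (hg' x)]
    rw [← Finset.sum_mul, ← Finset.mul_sum, Finset.sum_sub_distrib, lap]
    simp only [mul_assoc, ← Finset.mul_sum, h_euler]
  calc ∫ x, (∑ j, pd n j f x * pd n j g x) * exp (-‖x‖ ^ 2)
      = ∑ j, ∫ x, pd n j f x * pd n j g x * exp (-‖x‖ ^ 2) := by
        simp only [Finset.sum_mul]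
        exact integral_finsetSum _ fun j _ => h_grad j
    _ = ∑ j, ∫ x, f x * (2 * x j * pd n j g x - pd n j (pd n j g) x) * exp (-‖x‖ ^ 2) :=
        Finset.sum_congr rfl fun j _ =>
          integral_pd_mul_pd_mul_exp_neg_norm_sq hf' hg j (h_grad j) (h_lap j) (h_prod j)
    _ = ∫ x, f x * (2 * b * g x - lap n g x) * exp (-‖x‖ ^ 2) := by
        rw [← integral_finsetSum _ fun j _ => h_lap j]
        simp only [h_pointwise]

end GaussianIntegrationByParts

theorem sphere_integral_grad_harmonic_general (n s : ℕ) (hn : 2 ≤ n) (hs : 1 ≤ s)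
    (P P' : EuclideanSpace ℝ (Fin n) → ℝ)
    (hP : ContDiff ℝ (⊤ : ℕ∞) P) (hP' : ContDiff ℝ (⊤ : ℕ∞) P')
    (hPhom : ∀ (t : ℝ) (x : EuclideanSpace ℝ (Fin n)), P (t • x) = t ^ s * P x)
    (hP'hom : ∀ (t : ℝ) (x : EuclideanSpace ℝ (Fin n)), P' (t • x) = t ^ s * P' x)
    (hP'harm : ∀ x, lap n P' x = 0) :
    ∫ y : sphere (0 : EuclideanSpace ℝ (Fin n)) 1,
        (∑ j, pd n j P (y : EuclideanSpace ℝ (Fin n)) * pd n j P' (y : EuclideanSpace ℝ (Fin n)))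
        ∂((volume : Measure (EuclideanSpace ℝ (Fin n))).toSphere)
      = (s : ℝ) * ((n : ℝ) + 2 * (s : ℝ) - 2) *
        ∫ y : sphere (0 : EuclideanSpace ℝ (Fin n)) 1,
          P (y : EuclideanSpace ℝ (Fin n)) * P' (y : EuclideanSpace ℝ (Fin n))
          ∂((volume : Measure (EuclideanSpace ℝ (Fin n))).toSphere) := by
  have : NeZero n := ⟨by omega⟩
  have hs' : (1 : ℝ) ≤ s := by exact_mod_cast hs
  have hn' : (2 : ℝ) ≤ n := by exact_mod_cast hn
  have hP2 : ContDiff ℝ 2 P := hP.of_le (WithTop.coe_le_coe.2 le_top)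
  have hP'2 : ContDiff ℝ 2 P' := hP'.of_le (WithTop.coe_le_coe.2 le_top)
  have hPh := IsPosHomogeneous.of_pow hPhom
  have hP'h := IsPosHomogeneous.of_pow hP'hom
  have h_grad_h : IsPosHomogeneous (fun x => ∑ j, pd n j P x * pd n j P' x) ((s - 1) + (s - 1)) :=
    IsPosHomogeneous.sum _ fun j _ =>
      (hPh.pd (hP2.differentiable two_ne_zero) j).mul (hP'h.pd (hP'2.differentiable two_ne_zero) j)
  have h_green : ∫ x, (∑ j, pd n j P x * pd n j P' x) * exp (-‖x‖ ^ 2)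
      = 2 * s * ∫ x, P x * P' x * exp (-‖x‖ ^ 2) := by
    rw [integral_sum_pd_mul_pd_mul_exp_neg_norm_sq_of_homogeneous hPh hP'h
      (hP2.of_le one_le_two) hP'2 (by linarith), ← integral_const_mul]
    congr with x
    rw [hP'harm]
    ring
  have h_deg : ∀ d : ℝ, 2 * s - 2 ≤ d → -(finrank ℝ (EuclideanSpace ℝ (Fin n)) : ℝ) < d :=
    fun d hd => by rw [finrank_euclideanSpace_fin]; linarith
  rw [h_grad_h.integral_mul_exp_neg_norm_sq volume (h_deg _ (by linarith)),
    (hPh.mul hP'h).integral_mul_exp_neg_norm_sq volume (h_deg _ (by linarith)),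
    finrank_euclideanSpace_fin] at h_green
  have h_arg : 0 < ((n : ℝ) + (s - 1 + (s - 1))) / 2 := by linarith
  rw [show ((n : ℝ) + (s + s)) / 2 = (n + (s - 1 + (s - 1))) / 2 + 1 by ring,
    Real.Gamma_add_one h_arg.ne'] at h_green
  apply mul_left_cancel₀ (Real.Gamma_pos_of_pos h_arg).ne'
  linear_combination 2 * h_green

/-- For homogeneous harmonic polynomials `P`, `P'` of degree `s` on `ℝⁿ`,
`∫_{S^{n−1}} ∂ⱼP ∂ⱼP' = s(n+2s−2) ∫_{S^{n−1}} P P'` (sum over `j`, integrals with the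
standard surface measure of the unit sphere). -/
theorem sphere_integral_grad_harmonic (n s : ℕ) (hn : 2 ≤ n) (hs : 1 ≤ s)
    (P P' : EuclideanSpace ℝ (Fin n) → ℝ)
    (hP : ContDiff ℝ (⊤ : ℕ∞) P) (hP' : ContDiff ℝ (⊤ : ℕ∞) P')
    (hPhom : ∀ (t : ℝ) (x : EuclideanSpace ℝ (Fin n)), P (t • x) = t ^ s * P x)
    (hP'hom : ∀ (t : ℝ) (x : EuclideanSpace ℝ (Fin n)), P' (t • x) = t ^ s * P' x)
    (hPharm : ∀ x, lap n P x = 0) (hP'harm : ∀ x, lap n P' x = 0) :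
    ∫ y : sphere (0 : EuclideanSpace ℝ (Fin n)) 1,
        (∑ j, pd n j P (y : EuclideanSpace ℝ (Fin n)) * pd n j P' (y : EuclideanSpace ℝ (Fin n)))
        ∂((volume : Measure (EuclideanSpace ℝ (Fin n))).toSphere)
      = (s : ℝ) * ((n : ℝ) + 2 * (s : ℝ) - 2) *
        ∫ y : sphere (0 : EuclideanSpace ℝ (Fin n)) 1,
          P (y : EuclideanSpace ℝ (Fin n)) * P' (y : EuclideanSpace ℝ (Fin n))
          ∂((volume : Measure (EuclideanSpace ℝ (Fin n))).toSphere) :=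
  sphere_integral_grad_harmonic_general n s hn hs P P' hP hP' hPhom hP'hom hP'harm
end
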